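/- arXiv:2206.04261 — 3 statements merged into one kernel-verified Lean document; each statement's English description precedes it below -/
import Mathlib

section
/- For n ≥ 11, the number of maximal unrefinable partitions of T_n − 1 equals 1, and the unique maximal unrefinable partition of T_n − 1 is (1, 2, ..., n−2, 2n−2). -/
/-- The n-th triangular number. -/
def T (n : ℕ) : ℕ := n * (n + 1) / 2

/-- A partition of `N` into distinct parts, represented as a finite set of
positive integers with at least two elements summing to `N`. -/
def DistinctPartition (N : ℕ) (S : Finset ℕ) : Prop :=
  (∀ x ∈ S, 0 < x) ∧ 2 ≤ S.card ∧ S.sum id = N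

/-- The missing parts: integers in `{1, …, λ_t}` not appearing in the partition. -/
def Missing (S : Finset ℕ) : Finset ℕ := Finset.Icc 1 (S.sup id) \ S

/-- No part is the sum of two distinct missing parts. -/
def Unrefinable (S : Finset ℕ) : Prop :=
  ∀ a ∈ Missing S, ∀ b ∈ Missing S, a ≠ b → a + b ∉ S

def UnrefinablePartition (N : ℕ) (S : Finset ℕ) : Prop :=
  DistinctPartition N S ∧ Unrefinable S

/-- A maximal unrefinable partition: its largest part is maximal among the
largest parts of all unrefinable partitions of `N`. -/
def MaximalUnrefinable (N : ℕ) (S : Finset ℕ) : Prop :=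
  UnrefinablePartition N S ∧
    ∀ S' : Finset ℕ, UnrefinablePartition N S' → S'.sup id ≤ S.sup id

lemma Tdouble (n : ℕ) : 2 * T n = n * (n + 1) := by
  have h : 2 ∣ n * (n + 1) := (Nat.even_mul_succ_self n).two_dvd
  unfold T
  exact Nat.mul_div_cancel' h

lemma sumIoc (k : ℕ) : 2 * (Finset.Ioc 0 k).sum id = k * (k + 1) := by
  induction k with
  | zero => simp
  | succ k ih =>
    rw [show Finset.Ioc 0 (k+1) = insert (k+1) (Finset.Ioc 0 k) by
      ext x; simp [Finset.mem_Ioc]; omega]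
    rw [Finset.sum_insert (by simp [Finset.mem_Ioc])]
    have : (id (k+1) : ℕ) = k + 1 := rfl
    rw [this, Nat.mul_add, ih]; ring

lemma main_lemma (n : ℕ) (hn : 11 ≤ n) (S : Finset ℕ)
    (h : UnrefinablePartition (T n - 1) S) :
    S.sup id ≤ 2 * n - 2 ∧
      (S.sup id = 2 * n - 2 → S = insert (2 * n - 2) (Finset.Icc 1 (n - 2))) := by
  obtain ⟨⟨hpos, hcard, hsum⟩, hunref⟩ := h
  set m := S.sup id with hm
  have hne : S.Nonempty := Finset.card_pos.mp (by omega)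
  have hm_mem : m ∈ S := by
    obtain ⟨b, hb, hbe⟩ := Finset.exists_mem_eq_sup S hne id
    rw [hm, hbe]; exact hb
  have hm1 : 1 ≤ m := hpos m hm_mem
  have hSsub : S ⊆ Finset.Icc 1 m := fun x hx =>
    Finset.mem_Icc.mpr ⟨hpos x hx, Finset.le_sup (f := id) hx⟩
  set M := Missing S with hMdef
  have hMmem : ∀ a ∈ M, (1 ≤ a ∧ a ≤ m) ∧ a ∉ S := by
    intro a ha
    rw [hMdef, Missing, Finset.mem_sdiff, Finset.mem_Icc] at ha
    exact ha
  have hIcc : Finset.Icc 1 m = Finset.Ioc 0 m := by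
    ext x; simp [Finset.mem_Icc, Finset.mem_Ioc]; omega
  have hsplit : M.sum id + S.sum id = (Finset.Ioc 0 m).sum id := by
    rw [← hIcc, hMdef, Missing, ← hm]
    exact Finset.sum_sdiff hSsub
  set p := (m - 1) / 2 with hp
  set f : ℕ → ℕ := fun a => max a (m - a) with hf
  have hfJ : ∀ a ∈ M, f a ∈ Finset.Ioc p (m - 1) := by
    intro a ha
    obtain ⟨⟨h1, h2⟩, h3⟩ := hMmem a ha
    have hne' : a ≠ m := fun he => h3 (he ▸ hm_mem)
    have l1 : a ≤ f a := le_max_left _ _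
    have l2 : m - a ≤ f a := le_max_right _ _
    have l3 : f a = a ∨ f a = m - a := max_choice _ _
    rw [Finset.mem_Ioc]
    omega
  have hinj : ∀ a ∈ M, ∀ b ∈ M, f a = f b → a = b := by
    intro a ha b hb hfab
    by_contra hab
    obtain ⟨⟨ha1, ha2⟩, ha3⟩ := hMmem a ha
    obtain ⟨⟨hb1, hb2⟩, hb3⟩ := hMmem b hb
    have hanem : a ≠ m := fun he => ha3 (he ▸ hm_mem)
    have hbnem : b ≠ m := fun he => hb3 (he ▸ hm_mem)
    have habm : a + b = m := by
      rcases max_choice a (m - a) with h1 | h1 <;>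
        rcases max_choice b (m - b) with h2 | h2 <;>
      · rw [hf] at hfab; simp only at hfab; omega
    exact hunref a ha b hb hab (habm ▸ hm_mem)
  -- key inequality
  have c1 : M.sum id ≤ M.sum f := Finset.sum_le_sum (fun a _ => le_max_left _ _)
  have c2 : (M.image f).sum id = M.sum f := Finset.sum_image hinj
  have c3 : M.image f ⊆ Finset.Ioc p (m - 1) := by
    intro x hx
    obtain ⟨a, ha, rfl⟩ := Finset.mem_image.mp hx
    exact hfJ a ha
  have c4 : (M.image f).sum id ≤ (Finset.Ioc p (m - 1)).sum id :=
    Finset.sum_le_sum_of_subset c3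
  have c5 : (Finset.Ioc 0 p).sum id + (Finset.Ioc p (m - 1)).sum id
      = (Finset.Ioc 0 (m - 1)).sum id :=
    Finset.sum_Ioc_consecutive id (Nat.zero_le _) (by omega)
  have e1 : 2 * (Finset.Ioc 0 (m - 1)).sum id = (m - 1) * (m - 1 + 1) := sumIoc _
  have e2 : 2 * (Finset.Ioc 0 p).sum id = p * (p + 1) := sumIoc _
  have eC : 2 * (Finset.Ioc 0 m).sum id = m * (m + 1) := sumIoc _
  have e3 : 2 * T n = n * (n + 1) := Tdouble n
  have hT1 : 11 * 12 ≤ n * (n + 1) := Nat.mul_le_mul hn (by omega)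
  -- the bound
  have hbound : m ≤ 2 * n - 2 := by
    by_contra hc
    push_neg at hc
    have hm2n : 2 * n - 1 ≤ m := by omega
    obtain ⟨X, hX⟩ : ∃ X, m = X + 1 := ⟨m - 1, by omega⟩
    have hpn : n - 1 ≤ p := by omega
    have hpp : n * n ≤ (p + 1) * (p + 1) := Nat.mul_le_mul (by omega) (by omega)
    have q1 : (m - 1) * (m - 1 + 1) = X * X + X := by
      rw [hX, Nat.add_sub_cancel]; ring
    have q2 : m * (m + 1) = X * X + 3 * X + 2 := by rw [hX]; ring
    have r2 : p * (p + 1) = p * p + p := by ring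
    have r4 : n * (n + 1) = n * n + n := by ring
    have r5 : (p + 1) * (p + 1) = p * p + 2 * p + 1 := by ring
    omega
  refine ⟨hbound, ?_⟩
  intro hmeq
  obtain ⟨nn, rfl⟩ : ∃ nn, n = nn + 2 := ⟨n - 2, by omega⟩
  have hmval : m = 2 * nn + 2 := by omega
  have hpval : p = nn := by omega
  -- compute s = sum of J
  have r1 : (m - 1) * (m - 1 + 1) = 4 * (nn * nn) + 6 * nn + 2 := by
    rw [show m - 1 = 2 * nn + 1 by omega]; ring
  have r2 : m * (m + 1) = 4 * (nn * nn) + 10 * nn + 6 := by rw [hmval]; ring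
  have r3 : (nn + 2) * (nn + 2 + 1) = nn * nn + 5 * nn + 6 := by ring
  have r4 : p * (p + 1) = nn * nn + nn := by rw [hpval]; ring
  have hseq : M.sum id = (Finset.Ioc p (m - 1)).sum id := by omega
  have hMf : M.sum id = M.sum f := by omega
  have hfid : ∀ a ∈ M, f a = a := by
    by_contra hcon
    push_neg at hcon
    obtain ⟨a, ha, hne'⟩ := hcon
    have : M.sum id < M.sum f :=
      Finset.sum_lt_sum (fun i _ => le_max_left _ _)
        ⟨a, ha, lt_of_le_of_ne (le_max_left _ _) (Ne.symm hne')⟩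
    omega
  have hMJ : M ⊆ Finset.Ioc p (m - 1) := by
    intro a ha
    rw [← hfid a ha]
    exact hfJ a ha
  have hJM : Finset.Ioc p (m - 1) = M := by
    have hsd : (Finset.Ioc p (m - 1) \ M).sum id + M.sum id
        = (Finset.Ioc p (m - 1)).sum id := Finset.sum_sdiff hMJ
    have hzero : (Finset.Ioc p (m - 1) \ M).sum id = 0 := by omega
    have hempty : Finset.Ioc p (m - 1) \ M = ∅ := by
      by_contra hne'
      obtain ⟨x, hx⟩ := Finset.nonempty_of_ne_empty hne'
      have hx1 : x ∈ Finset.Ioc p (m - 1) := (Finset.mem_sdiff.mp hx).1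
      have hx2 : 0 < x := by
        rw [Finset.mem_Ioc] at hx1; omega
      have : x ≤ (Finset.Ioc p (m - 1) \ M).sum id := Finset.single_le_sum
        (f := id) (fun i _ => Nat.zero_le i) hx
      omega
    exact Finset.Subset.antisymm (Finset.sdiff_eq_empty_iff_subset.mp hempty) hMJ
  have hSeq : S = Finset.Icc 1 m \ Finset.Ioc p (m - 1) := by
    rw [hJM, hMdef, Missing, ← hm]
    ext x
    simp only [Finset.mem_sdiff]
    constructor
    · intro hx
      exact ⟨hSsub hx, fun hc => hc.2 hx⟩
    · rintro ⟨hx1, hx2⟩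
      by_contra hxS
      exact hx2 ⟨hx1, hxS⟩
  rw [hSeq]
  ext x
  simp only [Finset.mem_sdiff, Finset.mem_Icc, Finset.mem_Ioc, Finset.mem_insert]
  omega


lemma S0_unref (n : ℕ) (hn : 11 ≤ n) :
    UnrefinablePartition (T n - 1) (insert (2 * n - 2) (Finset.Icc 1 (n - 2))) ∧
    (insert (2 * n - 2) (Finset.Icc 1 (n - 2))).sup id = 2 * n - 2 := by
  set S0 := insert (2 * n - 2) (Finset.Icc 1 (n - 2)) with hS0
  have hmem : ∀ x, x ∈ S0 ↔ x = 2 * n - 2 ∨ (1 ≤ x ∧ x ≤ n - 2) := by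
    intro x; rw [hS0]; simp [Finset.mem_insert, Finset.mem_Icc]
  have hsup : S0.sup id = 2 * n - 2 := by
    apply le_antisymm
    · apply Finset.sup_le
      intro x hx
      rw [hmem] at hx
      simp only [id]
      omega
    · exact Finset.le_sup (f := id) ((hmem _).mpr (Or.inl rfl))
  refine ⟨⟨⟨?_, ?_, ?_⟩, ?_⟩, hsup⟩
  · intro x hx; rw [hmem] at hx; omega
  · exact Finset.one_lt_card.mpr ⟨1, (hmem 1).mpr (Or.inr ⟨le_refl 1, by omega⟩),
      2 * n - 2, (hmem _).mpr (Or.inl rfl), by omega⟩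
  · rw [hS0, Finset.sum_insert (by rw [Finset.mem_Icc]; omega)]
    have hIcc : Finset.Icc 1 (n - 2) = Finset.Ioc 0 (n - 2) := by
      ext x; simp [Finset.mem_Icc, Finset.mem_Ioc]; omega
    rw [hIcc]
    have e1 : 2 * (Finset.Ioc 0 (n - 2)).sum id = (n - 2) * (n - 2 + 1) := sumIoc _
    have e3 : 2 * T n = n * (n + 1) := Tdouble n
    obtain ⟨k, hk⟩ : ∃ k, n = k + 2 := ⟨n - 2, by omega⟩
    have q1 : (n - 2) * (n - 2 + 1) = k * k + k := by
      rw [hk, Nat.add_sub_cancel]; ring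
    have q2 : n * (n + 1) = k * k + 5 * k + 6 := by rw [hk]; ring
    show 2 * n - 2 + (Finset.Ioc 0 (n - 2)).sum id = T n - 1
    omega
  · intro a ha b hb hab hmemS
    rw [Missing, Finset.mem_sdiff, Finset.mem_Icc, hsup] at ha hb
    obtain ⟨⟨ha1, ha2⟩, ha3⟩ := ha
    obtain ⟨⟨hb1, hb2⟩, hb3⟩ := hb
    rw [hmem] at ha3 hb3 hmemS
    omega

theorem count_d_eq_one (n : ℕ) (hn : 11 ≤ n) :
    {S : Finset ℕ | MaximalUnrefinable (T n - 1) S}.ncard = 1 ∧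
    ∀ S : Finset ℕ, MaximalUnrefinable (T n - 1) S →
      S = insert (2 * n - 2) (Finset.Icc 1 (n - 2)) := by
  obtain ⟨hu0, hsup0⟩ := S0_unref n hn
  set S0 := insert (2 * n - 2) (Finset.Icc 1 (n - 2)) with hS0
  have hmax0 : MaximalUnrefinable (T n - 1) S0 := by
    refine ⟨hu0, fun S' h' => ?_⟩
    rw [hsup0]
    exact (main_lemma n hn S' h').1
  have huniq : ∀ S : Finset ℕ, MaximalUnrefinable (T n - 1) S → S = S0 := by
    intro S hS
    have h1 : S.sup id ≤ 2 * n - 2 := (main_lemma n hn S hS.1).1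
    have h2 : 2 * n - 2 ≤ S.sup id := hsup0 ▸ hS.2 S0 hu0
    exact (main_lemma n hn S hS.1).2 (le_antisymm h1 h2)
  constructor
  · have : {S : Finset ℕ | MaximalUnrefinable (T n - 1) S} = {S0} := by
      ext S
      simp only [Set.mem_setOf_eq, Set.mem_singleton_iff]
      exact ⟨huniq S, fun h => h ▸ hmax0⟩
    rw [this, Set.ncard_singleton]
  · exact huniq
end

section
/- For n ≥ 11, the number of maximal unrefinable partitions of T_n − 2 equals 1. -/
lemma gaussT (k : ℕ) : 2 * T k = k * (k + 1) := by
  unfold T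
  exact Nat.two_mul_div_two_of_even (Nat.even_mul_succ_self k) |>.symm ▸ rfl

lemma sum_Icc_id (k : ℕ) : ∑ x ∈ Finset.Icc 1 k, x = T k := by
  induction k with
  | zero => simp [T]
  | succ k ih =>
    rw [Finset.sum_Icc_succ_top (by omega)]
    have h1 := gaussT k
    have h2 := gaussT (k+1)
    have : (k+1)*(k+1+1) = k*(k+1) + 2*(k+1) := by ring
    omega

lemma T_mono : Monotone T := by
  intro a b hab
  unfold T
  exact Nat.div_le_div_right (Nat.mul_le_mul hab (by omega))

lemma T_ident (n : ℕ) (hn : 11 ≤ n) : 2*n-3 + T (n-2) = T n - 2 := by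
  obtain ⟨k, rfl⟩ : ∃ k, n = k + 11 := ⟨n - 11, by omega⟩
  have h1 := gaussT (k+11)
  have h2 := gaussT (k+11-2)
  have he : k+11-2 = k+9 := by omega
  rw [he] at h2 ⊢
  have hr : (k+9)*(k+9+1) + (4*k+42) = (k+11)*(k+11+1) := by ring
  omega

lemma core (N : ℕ) (S : Finset ℕ) (h : UnrefinablePartition N S) :
    S.sup id + T ((S.sup id - 1) / 2) ≤ N ∧
      (S.sup id + T ((S.sup id - 1) / 2) = N →
        S = insert (S.sup id) (Finset.Icc 1 ((S.sup id - 1) / 2))) := by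
  classical
  obtain ⟨⟨hpos, hcard, hsum⟩, hunref⟩ := h
  have hne : S.Nonempty := Finset.card_pos.mp (by omega)
  obtain ⟨b, hbS, hbm⟩ := Finset.exists_mem_eq_sup S hne id
  set m := S.sup id with hm
  have hmS : m ∈ S := by rw [hbm]; exact hbS
  set h2 := (m - 1) / 2 with hh2
  have hmpos : 0 < m := hpos m hmS
  have h2m : 2 * h2 ≤ m - 1 := by omega
  -- each x in Icc 1 h2: if x ∉ S then m - x ∈ S
  have key : ∀ x ∈ Finset.Icc 1 h2, x ∉ S → m - x ∈ S := by
    intro x hx hxS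
    rw [Finset.mem_Icc] at hx
    by_contra hmxS
    have hxM : x ∈ Missing S := by
      rw [Missing, Finset.mem_sdiff, Finset.mem_Icc, ← hm]
      exact ⟨⟨hx.1, by omega⟩, hxS⟩
    have hmxM : m - x ∈ Missing S := by
      rw [Missing, Finset.mem_sdiff, Finset.mem_Icc, ← hm]
      exact ⟨⟨by omega, by omega⟩, hmxS⟩
    have hne2 : x ≠ m - x := by omega
    have := hunref x hxM (m - x) hmxM hne2
    have hxm : x + (m - x) = m := by omega
    rw [hxm] at this
    exact this hmS
  set f : ℕ → ℕ := fun x => if x ∈ S then x else m - x with hf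
  have hfS : ∀ x ∈ Finset.Icc 1 h2, f x ∈ S.erase m := by
    intro x hx
    rw [Finset.mem_Icc] at hx
    rw [hf]
    by_cases hxS : x ∈ S
    · simp only [hxS, if_true]
      exact Finset.mem_erase.mpr ⟨by omega, hxS⟩
    · simp only [hxS, if_false]
      exact Finset.mem_erase.mpr ⟨by omega, key x (Finset.mem_Icc.mpr hx) hxS⟩
  have hfge : ∀ x ∈ Finset.Icc 1 h2, x ≤ f x := by
    intro x hx
    rw [Finset.mem_Icc] at hx
    rw [hf]
    by_cases hxS : x ∈ S <;> simp only [hxS, if_true, if_false] <;> omega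
  have hinj : ∀ x ∈ Finset.Icc 1 h2, ∀ y ∈ Finset.Icc 1 h2, f x = f y → x = y := by
    intro x hx y hy hxy
    rw [Finset.mem_Icc] at hx hy
    rw [hf] at hxy
    by_cases hxS : x ∈ S <;> by_cases hyS : y ∈ S <;>
      simp only [hxS, hyS, if_true, if_false] at hxy <;> omega
  set P := (Finset.Icc 1 h2).image f with hP
  have hPsub : P ⊆ S.erase m := Finset.image_subset_iff.mpr hfS
  have hsum1 : ∑ x ∈ P, x = ∑ x ∈ Finset.Icc 1 h2, f x := Finset.sum_image hinj
  have hsum2 : ∑ x ∈ Finset.Icc 1 h2, x ≤ ∑ x ∈ Finset.Icc 1 h2, f x :=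
    Finset.sum_le_sum hfge
  have hsum3 : ∑ x ∈ P, x ≤ ∑ x ∈ S.erase m, x :=
    Finset.sum_le_sum_of_subset hPsub
  have hsum4 : m + ∑ x ∈ S.erase m, x = ∑ x ∈ S, x := Finset.add_sum_erase S id hmS
  have hsumS : ∑ x ∈ S, x = N := hsum
  have hTh2 := sum_Icc_id h2
  constructor
  · omega
  · intro heq
    have hEq1 : ∑ x ∈ S.erase m, x = T h2 := by omega
    have hEq2 : ∑ x ∈ Finset.Icc 1 h2, f x = ∑ x ∈ Finset.Icc 1 h2, x := by omega
    have hfx : ∀ x ∈ Finset.Icc 1 h2, f x = x := by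
      intro x hx
      exact ((Finset.sum_eq_sum_iff_of_le hfge).mp hEq2.symm x hx).symm
    have hIccS : ∀ x ∈ Finset.Icc 1 h2, x ∈ S := by
      intro x hx
      have := hfx x hx
      rw [hf] at this
      by_cases hxS : x ∈ S
      · exact hxS
      · simp only [hxS, if_false] at this
        rw [Finset.mem_Icc] at hx
        omega
    have hPeq : P = Finset.Icc 1 h2 := by
      rw [hP]
      rw [Finset.image_congr (g := id) (fun x hx => hfx x hx)]
      exact Finset.image_id
    have hPsum : ∑ x ∈ P, x = T h2 := by omega
    have hErase : S.erase m = Finset.Icc 1 h2 := by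
      apply Finset.Subset.antisymm
      · intro y hy
        by_contra hyP
        rw [← hPeq] at hyP
        have hins : insert y P ⊆ S.erase m := Finset.insert_subset hy hPsub
        have h5 : ∑ x ∈ insert y P, x ≤ ∑ x ∈ S.erase m, x :=
          Finset.sum_le_sum_of_subset hins
        rw [Finset.sum_insert hyP] at h5
        have hy1 : 0 < y := hpos y (Finset.mem_of_mem_erase hy)
        omega
      · rw [← hPeq]; exact hPsub
    rw [← hErase]
    exact (Finset.insert_erase hmS).symm

theorem count_d_eq_two (n : ℕ) (hn : 11 ≤ n) :
    {S : Finset ℕ | MaximalUnrefinable (T n - 2) S}.ncard = 1 := by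
  set Sstar := insert (2*n-3) (Finset.Icc 1 (n-2)) with hSs
  have hnotmem : 2*n-3 ∉ Finset.Icc 1 (n-2) := by
    rw [Finset.mem_Icc]; omega
  have hsupIcc : (Finset.Icc 1 (n-2)).sup id = n - 2 := by
    apply le_antisymm
    · exact Finset.sup_le (fun x hx => (Finset.mem_Icc.mp hx).2)
    · exact Finset.le_sup (f := id) (Finset.mem_Icc.mpr ⟨by omega, le_refl _⟩)
  have hsup : Sstar.sup id = 2*n-3 := by
    rw [hSs, Finset.sup_insert, hsupIcc]
    simp only [id]
    omega
  have hIdent := T_ident n hn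
  have hstar : UnrefinablePartition (T n - 2) Sstar := by
    refine ⟨⟨?_, ?_, ?_⟩, ?_⟩
    · intro x hx
      rw [hSs, Finset.mem_insert, Finset.mem_Icc] at hx
      omega
    · rw [hSs, Finset.card_insert_of_notMem hnotmem, Nat.card_Icc]
      omega
    · rw [hSs]
      have : (insert (2*n-3) (Finset.Icc 1 (n-2))).sum id
          = 2*n-3 + ∑ x ∈ Finset.Icc 1 (n-2), x := by
        rw [Finset.sum_insert hnotmem]; rfl
      rw [this, sum_Icc_id]
      omega
    · intro a ha b hb hab
      rw [Missing, hsup, Finset.mem_sdiff, Finset.mem_Icc, hSs, Finset.mem_insert,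
        Finset.mem_Icc] at ha hb
      push_neg at ha hb
      intro hc
      rw [hSs, Finset.mem_insert, Finset.mem_Icc] at hc
      omega
  have hbound : ∀ S : Finset ℕ, UnrefinablePartition (T n - 2) S → S.sup id ≤ 2*n-3 := by
    intro S hS
    by_contra hlt
    push_neg at hlt
    have hc := (core _ S hS).1
    have hmono : T (n-2) ≤ T ((S.sup id - 1)/2) := T_mono (by omega)
    omega
  have huniq : ∀ S : Finset ℕ, MaximalUnrefinable (T n - 2) S → S = Sstar := by
    intro S ⟨hS, hmax⟩
    have h1 : S.sup id ≤ 2*n-3 := hbound S hS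
    have h2 : 2*n-3 ≤ S.sup id := hsup ▸ hmax Sstar hstar
    have hse : S.sup id = 2*n-3 := le_antisymm h1 h2
    have hdiv : (S.sup id - 1)/2 = n - 2 := by omega
    have := (core _ S hS).2 (by rw [hdiv, hse]; omega)
    rw [hdiv, hse] at this
    rw [hSs]
    exact this
  have hset : {S : Finset ℕ | MaximalUnrefinable (T n - 2) S} = {Sstar} := by
    apply Set.eq_singleton_iff_unique_mem.mpr
    exact ⟨⟨hstar, fun S' h' => hsup ▸ hbound S' h'⟩, fun S hS => huniq S hS⟩
  rw [hset, Set.ncard_singleton]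
end

section
/- Let n ≥ 11 and 3 < d ≤ n−1 with n − d even. Then every maximal unrefinable partition of T_n − d has largest part equal to 2n − 5. -/
/-!
For `2k < m`, where `m` is the largest part of an unrefinable partition `S`, each pair `a, m - a`
with `1 ≤ a ≤ k` contains a part, since otherwise two distinct missing numbers would sum to `m`.
These parts are distinct, differ from `m`, and the one from the pair of `a` is at least `a`, so
`m + T k ≤ N`. For `N = T n - d` this rules out `m ≥ 2n - 3` (take `k = n - 2`), and for
`m = 2n - 4` (take `k = n - 3`) it leaves no room for further parts; as `m` is even, the sum then
has the parity of `T (n - 3)`, which is wrong when `n - d` is even. The value `2n - 5` is attained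
by `{1, …, n - 3}` with two elements `a` replaced by `2n - 5 - a`, together with `2n - 5`.
-/

open Finset

lemma T_succ (k : ℕ) : T (k + 1) = T k + (k + 1) := by
  unfold T
  rw [show (k + 1) * (k + 1 + 1) = k * (k + 1) + 2 * (k + 1) by ring,
    Nat.add_mul_div_left _ _ two_pos]

lemma T_eq_T_sub_three_add {n : ℕ} (hn : 3 ≤ n) : T n = T (n - 3) + (3 * n - 3) := by
  obtain ⟨p, rfl⟩ := Nat.exists_eq_add_of_le' hn
  rw [Nat.add_sub_cancel, T_succ, T_succ, T_succ]
  omega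

lemma sum_Icc_one_id (k : ℕ) : (Icc 1 k).sum id = T k := by
  induction k with
  | zero => rfl
  | succ k ih => rw [sum_Icc_succ_top (by omega), ih, T_succ, id]

lemma mem_Missing {S : Finset ℕ} {x : ℕ} : x ∈ Missing S ↔ 1 ≤ x ∧ x ≤ S.sup id ∧ x ∉ S := by
  simp only [Missing, mem_sdiff, mem_Icc, and_assoc]

lemma DistinctPartition.sup_mem {N : ℕ} {S : Finset ℕ} (hP : DistinctPartition N S) :
    S.sup id ∈ S := by
  obtain ⟨x, hx, hsup⟩ := exists_mem_eq_sup S (card_pos.mp (by have := hP.2.1; omega)) id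
  rwa [hsup]

namespace Unrefinable

variable {S : Finset ℕ} {a : ℕ}

lemma sup_sub_mem (hS : Unrefinable S) (hsup : S.sup id ∈ S) (ha : 0 < a)
    (h2a : 2 * a < S.sup id) (haS : a ∉ S) : S.sup id - a ∈ S := by
  by_contra h
  refine hS a (mem_Missing.2 ⟨ha, by omega, haS⟩) (S.sup id - a)
    (mem_Missing.2 ⟨by omega, by omega, h⟩) (by omega) ?_
  rwa [Nat.add_sub_cancel' (by omega)]

end Unrefinable

def pairPart (S : Finset ℕ) (a : ℕ) : ℕ := if a ∈ S then a else S.sup id - a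

section pairPart

variable {S : Finset ℕ} {k a : ℕ}

lemma pairPart_of_mem (ha : a ∈ S) : pairPart S a = a := if_pos ha

lemma le_pairPart (h : 2 * a ≤ S.sup id) : a ≤ pairPart S a := by
  unfold pairPart; split_ifs <;> omega

lemma pairPart_lt_sup (ha : 0 < a) (h : 2 * a < S.sup id) : pairPart S a < S.sup id := by
  unfold pairPart; split_ifs <;> omega

lemma injOn_pairPart (hk : 2 * k < S.sup id) : Set.InjOn (pairPart S) (Icc 1 k) := by
  intro a ha b hb hab
  simp only [coe_Icc, Set.mem_Icc] at ha hb
  unfold pairPart at hab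
  split_ifs at hab <;> omega

lemma even_pairPart_add (hm : Even (S.sup id)) (h : a ≤ S.sup id) : Even (pairPart S a + a) := by
  unfold pairPart
  split_ifs
  · exact ⟨a, rfl⟩
  · rwa [Nat.sub_add_cancel h]

lemma even_sum_pairPart_add_T (hm : Even (S.sup id)) (hk : k ≤ S.sup id) :
    Even (∑ a ∈ Icc 1 k, pairPart S a + T k) := by
  rw [← sum_Icc_one_id, ← sum_add_distrib]
  exact even_sum _ fun a ha => even_pairPart_add hm (by simp at ha; omega)

lemma T_le_sum_pairPart (hk : 2 * k ≤ S.sup id) : T k ≤ ∑ a ∈ Icc 1 k, pairPart S a := by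
  rw [← sum_Icc_one_id]
  exact sum_le_sum fun a ha => le_pairPart (a := a) (by simp at ha; omega)

lemma Unrefinable.pairPart_mem (hS : Unrefinable S) (hsup : S.sup id ∈ S) (ha : 0 < a)
    (h : 2 * a < S.sup id) : pairPart S a ∈ S := by
  unfold pairPart; split_ifs with haS
  · exact haS
  · exact hS.sup_sub_mem hsup ha h haS

end pairPart

def extraParts (S : Finset ℕ) (k : ℕ) : Finset ℕ :=
  S \ insert (S.sup id) ((Icc 1 k).image (pairPart S))

namespace UnrefinablePartition

variable {S : Finset ℕ} {N k : ℕ}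

lemma eq_sup_add_sum_pairPart_add (hP : UnrefinablePartition N S) (hk : 2 * k < S.sup id) :
    N = S.sup id + ∑ a ∈ Icc 1 k, pairPart S a + (extraParts S k).sum id := by
  have hsup := hP.1.sup_mem
  have hIcc : ∀ a ∈ Icc 1 k, 0 < a ∧ 2 * a < S.sup id := fun a ha => by simp at ha; omega
  have hsup_notMem : S.sup id ∉ (Icc 1 k).image (pairPart S) := by
    simp only [mem_image, not_exists, not_and]
    exact fun a ha => (pairPart_lt_sup (hIcc a ha).1 (hIcc a ha).2).ne
  have hsub : insert (S.sup id) ((Icc 1 k).image (pairPart S)) ⊆ S := by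
    refine insert_subset hsup (image_subset_iff.2 fun a ha => ?_)
    exact hP.2.pairPart_mem hsup (hIcc a ha).1 (hIcc a ha).2
  rw [← hP.1.2.2, extraParts, ← sum_sdiff hsub, sum_insert hsup_notMem,
    sum_image (injOn_pairPart hk)]
  simp only [id_eq]
  ring

lemma lt_of_mem_extraParts (hP : UnrefinablePartition N S) {x : ℕ} (hx : x ∈ extraParts S k) :
    k < x := by
  rw [extraParts, mem_sdiff, mem_insert, not_or] at hx
  by_contra hxk
  exact hx.2.2 (mem_image.2 ⟨x, mem_Icc.2 ⟨hP.1.1 x hx.1, by omega⟩, pairPart_of_mem hx.1⟩)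

lemma sup_add_T_le (hP : UnrefinablePartition N S) (hk : 2 * k < S.sup id) :
    S.sup id + T k ≤ N := by
  have := T_le_sum_pairPart (S := S) hk.le
  rw [hP.eq_sup_add_sum_pairPart_add hk]
  omega

end UnrefinablePartition

lemma UnrefinablePartition.sup_le_two_mul_sub_five {n d : ℕ} {S : Finset ℕ} (hd₁ : 3 < d)
    (hd₂ : d ≤ n - 1) (hpar : Even (n - d)) (hP : UnrefinablePartition (T n - d) S) :
    S.sup id ≤ 2 * n - 5 := by
  have hT := T_eq_T_sub_three_add (n := n) (by omega)
  by_contra! hlt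
  obtain hm | hm : 2 * n - 3 ≤ S.sup id ∨ S.sup id = 2 * n - 4 := by omega
  · have := hP.sup_add_T_le (k := n - 2) (by omega)
    have : T (n - 2) = T (n - 3) + (n - 2) := by rw [show n - 2 = n - 3 + 1 by omega, T_succ]
    omega
  · -- The slack `n + 1 - d` left by the bound with `k = n - 3` is smaller than any extra part,
    -- so `S` is the largest part plus one part from each pair `{a, 2n - 4 - a}`: a parity clash.
    have hk : 2 * (n - 3) < S.sup id := by omega
    have hsum := hP.eq_sup_add_sum_pairPart_add hk
    have hpairs := T_le_sum_pairPart (S := S) hk.le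
    have hextra : (extraParts S (n - 3)).sum id = 0 := by
      by_contra h
      obtain ⟨x, hx, -⟩ := exists_ne_zero_of_sum_ne_zero h
      have := hP.lt_of_mem_extraParts hx
      have : x ≤ (extraParts S (n - 3)).sum id :=
        single_le_sum (f := id) (fun _ _ => Nat.zero_le _) hx
      omega
    obtain ⟨r, hr⟩ := even_sum_pairPart_add_T (S := S) (k := n - 3) ⟨n - 2, by omega⟩ (by omega)
    obtain ⟨s, hs⟩ := hpar
    omega

def swapPartition (n a₁ a₂ : ℕ) : Finset ℕ :=
  (Icc 1 (n - 3) \ {a₁, a₂}) ∪ {2 * n - 5 - a₂, 2 * n - 5 - a₁, 2 * n - 5}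

section swapPartition

variable {n a₁ a₂ x : ℕ}

lemma mem_swapPartition : x ∈ swapPartition n a₁ a₂ ↔
    (1 ≤ x ∧ x ≤ n - 3 ∧ x ≠ a₁ ∧ x ≠ a₂) ∨
      x = 2 * n - 5 - a₂ ∨ x = 2 * n - 5 - a₁ ∨ x = 2 * n - 5 := by
  simp only [swapPartition, mem_union, mem_sdiff, mem_Icc, mem_insert, mem_singleton, not_or,
    and_assoc]

lemma sup_swapPartition : (swapPartition n a₁ a₂).sup id = 2 * n - 5 :=
  le_antisymm (Finset.sup_le fun x hx => by rw [mem_swapPartition] at hx; simp only [id]; omega)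
    (le_sup (f := id) (mem_swapPartition.2 (by omega)))

lemma sum_swapPartition (ha₁ : 0 < a₁) (h₁₂ : a₁ < a₂) (ha₂ : a₂ ≤ n - 3) :
    (swapPartition n a₁ a₂).sum id + 2 * (a₁ + a₂) = T (n - 3) + 3 * (2 * n - 5) := by
  have hpair : {a₁, a₂} ⊆ Icc 1 (n - 3) := by
    simp only [insert_subset_iff, singleton_subset_iff, mem_Icc]; omega
  have hdisj : Disjoint (Icc 1 (n - 3) \ {a₁, a₂}) {2 * n - 5 - a₂, 2 * n - 5 - a₁, 2 * n - 5} := by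
    simp only [disjoint_left, mem_sdiff, mem_Icc, mem_insert, mem_singleton]; omega
  have hlarge : ({2 * n - 5 - a₂, 2 * n - 5 - a₁, 2 * n - 5} : Finset ℕ).sum id =
      (2 * n - 5 - a₂) + ((2 * n - 5 - a₁) + (2 * n - 5)) := by
    rw [sum_insert (by simp only [mem_insert, mem_singleton]; omega), sum_pair (by omega)]; rfl
  have hsmall := sum_sdiff (f := id) hpair
  rw [sum_pair h₁₂.ne, sum_Icc_one_id] at hsmall
  rw [swapPartition, sum_union hdisj, hlarge]
  simp only [id_eq] at hsmall ⊢
  omega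

lemma unrefinable_swapPartition (ha₁ : n - 3 < 2 * a₁) (h₁₂ : a₁ < a₂) (ha₂ : a₂ ≤ n - 3)
    (h₁ : 2 * a₁ + a₂ ≠ 2 * n - 5) (h₂ : a₁ + 2 * a₂ ≠ 2 * n - 5) :
    Unrefinable (swapPartition n a₁ a₂) := by
  intro x hx y hy hxy
  simp only [mem_Missing, sup_swapPartition, mem_swapPartition] at hx hy ⊢
  omega

lemma unrefinablePartition_swapPartition {d : ℕ} (ha₁ : n - 3 < 2 * a₁) (h₁₂ : a₁ < a₂)
    (ha₂ : a₂ ≤ n - 3) (h₁ : 2 * a₁ + a₂ ≠ 2 * n - 5) (h₂ : a₁ + 2 * a₂ ≠ 2 * n - 5)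
    (hsum : 2 * (a₁ + a₂) + 12 = 3 * n + d) :
    UnrefinablePartition (T n - d) (swapPartition n a₁ a₂) := by
  have hc : 2 * n - 5 ∈ swapPartition n a₁ a₂ := mem_swapPartition.2 (by omega)
  have hca₁ : 2 * n - 5 - a₁ ∈ swapPartition n a₁ a₂ := mem_swapPartition.2 (by omega)
  refine ⟨⟨fun x hx => ?_, one_lt_card.2 ⟨_, hc, _, hca₁, by omega⟩, ?_⟩,
    unrefinable_swapPartition ha₁ h₁₂ ha₂ h₁ h₂⟩
  · rw [mem_swapPartition] at hx; omega
  · have := sum_swapPartition (n := n) (by omega) h₁₂ ha₂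
    have := T_eq_T_sub_three_add (n := n) (by omega)
    omega

end swapPartition

-- The sum condition forces `2 (a₁ + a₂) = 3n + d - 12`; `a₂ = n - 3` only fails for `d = 4`.
lemma exists_unrefinablePartition_sup_eq {n d : ℕ} (hn : 9 ≤ n) (hd₁ : 3 < d) (hd₂ : d ≤ n - 1)
    (hpar : Even (n - d)) : ∃ S, UnrefinablePartition (T n - d) S ∧ S.sup id = 2 * n - 5 := by
  obtain ⟨s, hs⟩ := hpar
  obtain rfl | hd₄ := eq_or_ne d 4
  · exact ⟨_, unrefinablePartition_swapPartition (a₁ := s + 2) (a₂ := n - 4)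
      (by omega) (by omega) (by omega) (by omega) (by omega) (by omega), sup_swapPartition⟩
  · exact ⟨_, unrefinablePartition_swapPartition (a₁ := s + d - 3) (a₂ := n - 3)
      (by omega) (by omega) (by omega) (by omega) (by omega) (by omega), sup_swapPartition⟩

theorem max_part_n_sub_d_even (n d : ℕ) (hn : 11 ≤ n) (hd1 : 3 < d) (hd2 : d ≤ n - 1)
    (hpar : Even (n - d)) (S : Finset ℕ) (h : MaximalUnrefinable (T n - d) S) :
    S.sup id = 2 * n - 5 := by
  obtain ⟨hS, hmax⟩ := h
  obtain ⟨S', hS', hsup'⟩ := exists_unrefinablePartition_sup_eq (by omega) hd1 hd2 hpar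
  exact le_antisymm (hS.sup_le_two_mul_sub_five hd1 hd2 hpar) (hsup' ▸ hmax S' hS')
end
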